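/- arXiv:2311.09679 — 4 statements merged into one kernel-verified Lean document; each statement's English description precedes it below -/
import Mathlib

section
/- Quantitative implicit function theorem: Let p and q be positive integers and let f : ℝ^p × ℝ^q → ℝ^q be a C² function. Let x = (x₁, x₂) ∈ ℝ^p × ℝ^q be such that f(x) = 0 and the partial derivative T := D_{x₂}f(x) : ℝ^q → ℝ^q is invertible. Let δ > 0 be such that for every y = (y₁, y₂) with ‖y₁ − x₁‖ ≤ δ and ‖y₂ − x₂‖ ≤ δ one has ‖Id_{ℝ^q} − T⁻¹ ∘ D_{x₂}f(y)‖ ≤ 1/2. Let C > 0 be such that ‖D_{x₁}f(y)‖ ≤ C for all such y, let M = ‖T⁻¹‖, and set δ' = δ/(2MC); assume δ' ≤ δ. Then there exists a C² function φ : {y₁ ∈ ℝ^p : ‖y₁ − x₁‖ < δ'} → ℝ^q such that for every y = (y₁, y₂) ∈ ℝ^p × ℝ^q with ‖y₁ − x₁‖ < δ' and ‖y₂ − x₂‖ < δ, one has f(y) = 0 if and only if y₂ = φ(y₁). -/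
/-!
For fixed `y₁`, the simplified Newton map `z ↦ z - T⁻¹ f (y₁, z)` has derivative
`Id - T⁻¹ ∘ D_{x₂} f (y₁, z)`, so it is a `1/2`-contraction of the closed `δ`-ball around `x₂`,
and its fixed points are the zeros of `f (y₁, ·)`. The bound on `D_{x₁} f` gives
`‖T⁻¹ f (y₁, x₂)‖ ≤ M C ‖y₁ - x₁‖ < δ / 2` when `‖y₁ - x₁‖ < δ'`, so the ball is mapped into itself
and the unique zero `φ y₁` satisfies `‖φ y₁ - x₂‖ ≤ 2 M C ‖y₁ - x₁‖ < δ`.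

Smoothness is local: at a point of the graph `D_{x₂} f` is invertible, since
`‖Id - T⁻¹ D_{x₂} f‖ < 1`, so the classical implicit function theorem gives a `C²` local solution,
which agrees with `φ` near that point by uniqueness of zeros in the ball.
-/

open Metric ContinuousLinearMap Set Topology
open scoped NNReal

variable {E F : Type*} [NormedAddCommGroup E] [NormedSpace ℝ E]
  [NormedAddCommGroup F] [NormedSpace ℝ F]

def newtonMap (T : F ≃L[ℝ] F) (h : F → F) (z : F) : F := z - T.symm (h z)

section NewtonMap

variable {T : F ≃L[ℝ] F} {h : F → F} {K : ℝ≥0} {s : Set F}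

theorem newtonMap_eq_self_iff {z : F} : newtonMap T h z = z ↔ h z = 0 := by
  simp [newtonMap]

theorem lipschitzOnWith_newtonMap {h' : F → F →L[ℝ] F} (hs : Convex ℝ s)
    (hh : ∀ z ∈ s, HasFDerivAt h (h' z) z)
    (hK : ∀ z ∈ s, ‖ContinuousLinearMap.id ℝ F - (T.symm : F →L[ℝ] F) ∘L h' z‖ ≤ K) :
    LipschitzOnWith K (newtonMap T h) s :=
  hs.lipschitzOnWith_of_nnnorm_hasFDerivWithin_le
    (fun z hz => ((hasFDerivAt_id z).sub (T.symm.hasFDerivAt.comp z (hh z hz))).hasFDerivWithinAt)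
    (fun z hz => by exact_mod_cast hK z hz)

theorem one_sub_mul_norm_sub_le_of_apply_eq_zero (hN : LipschitzOnWith K (newtonMap T h) s)
    {z w : F} (hz : z ∈ s) (hw : w ∈ s) (hz0 : h z = 0) :
    (1 - K) * ‖z - w‖ ≤ ‖T.symm (h w)‖ := by
  have hfix : newtonMap T h z = z := newtonMap_eq_self_iff.2 hz0
  have hsplit : z - w = (newtonMap T h z - newtonMap T h w) - T.symm (h w) := by
    rw [hfix, newtonMap]; abel
  have htri := hsplit ▸ norm_sub_le (newtonMap T h z - newtonMap T h w) (T.symm (h w))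
  linarith [hN.norm_sub_le hz hw]

theorem eq_of_apply_eq_zero (hN : LipschitzOnWith K (newtonMap T h) s) (hK : K < 1)
    {z z' : F} (hz : z ∈ s) (hz' : z' ∈ s) (hz0 : h z = 0) (hz'0 : h z' = 0) : z = z' := by
  have hle := one_sub_mul_norm_sub_le_of_apply_eq_zero hN hz hz' hz0
  rw [hz'0, map_zero, norm_zero] at hle
  have hK' : (0 : ℝ) < 1 - K := sub_pos.2 (by exact_mod_cast hK)
  exact sub_eq_zero.1 (norm_le_zero_iff.1 (nonpos_of_mul_nonpos_right hle hK'))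

theorem exists_apply_eq_zero_mem_closedBall [CompleteSpace F] {z₀ : F} {r : ℝ}
    (hN : LipschitzOnWith K (newtonMap T h) (closedBall z₀ r)) (hK : K < 1)
    (hr : ‖T.symm (h z₀)‖ ≤ (1 - K) * r) : ∃ z ∈ closedBall z₀ r, h z = 0 := by
  have hr0 : 0 ≤ r :=
    nonneg_of_mul_nonneg_right ((norm_nonneg _).trans hr) (sub_pos.2 (by exact_mod_cast hK))
  have hz₀ : z₀ ∈ closedBall z₀ r := mem_closedBall_self hr0
  have hmaps : MapsTo (newtonMap T h) (closedBall z₀ r) (closedBall z₀ r) := by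
    intro z hz
    rw [mem_closedBall_iff_norm] at hz ⊢
    have hsplit : newtonMap T h z - z₀ = (newtonMap T h z - newtonMap T h z₀) - T.symm (h z₀) := by
      rw [newtonMap, newtonMap]; abel
    calc ‖newtonMap T h z - z₀‖
        ≤ ‖newtonMap T h z - newtonMap T h z₀‖ + ‖T.symm (h z₀)‖ := hsplit ▸ norm_sub_le _ _
      _ ≤ K * ‖z - z₀‖ + (1 - K) * r :=
          add_le_add (hN.norm_sub_le (mem_closedBall_iff_norm.2 hz) hz₀) hr
      _ ≤ r := by nlinarith [K.2]
  obtain ⟨z, hz, hfix, -⟩ := ContractingWith.exists_fixedPoint' isClosed_closedBall.isComplete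
    hmaps ⟨hK, hN.mapsToRestrict hmaps⟩ hz₀ (edist_ne_top _ _)
  exact ⟨z, hz, newtonMap_eq_self_iff.1 hfix⟩

end NewtonMap

theorem isInvertible_of_norm_id_sub_lt_one [CompleteSpace F] {A : F →L[ℝ] F}
    (hA : ‖ContinuousLinearMap.id ℝ F - A‖ < 1) : A.IsInvertible :=
  ⟨ContinuousLinearEquiv.unitsEquiv ℝ F (Units.oneSub _ hA), by
    ext; simp [Units.oneSub]⟩

theorem contDiffOn_of_apply_eq_zero_iff [CompleteSpace E] [CompleteSpace F] {G : Type*}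
    [NormedAddCommGroup G] [NormedSpace ℝ G] [CompleteSpace G] {f : E × F → G} {n : WithTop ℕ∞}
    (hf : ContDiff ℝ n f) (hn : n ≠ 0) {φ : E → F} {U : Set E} {V : Set F} (hU : IsOpen U)
    (hV : IsOpen V) (hφV : MapsTo φ U V)
    (hφ : ∀ y₁ ∈ U, ∀ y₂ ∈ V, f (y₁, y₂) = 0 ↔ y₂ = φ y₁)
    (hinv : ∀ y₁ ∈ U, (fderiv ℝ f (y₁, φ y₁) ∘L inr ℝ E F).IsInvertible) :
    ContDiffOn ℝ n φ U := by
  intro a ha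
  have hfa : ContDiffAt ℝ n f (a, φ a) := hf.contDiffAt
  set ψ := hfa.implicitFunction hn (hinv a ha)
  have hψa : ψ a = φ a := hfa.implicitFunction_apply_self hn (hinv a ha)
  have hψ : ContDiffAt ℝ n ψ a := hfa.contDiffAt_implicitFunction hn (hinv a ha)
  have hψV : ∀ᶠ y₁ in 𝓝 a, ψ y₁ ∈ V :=
    hψ.continuousAt.preimage_mem_nhds (hV.mem_nhds (hψa ▸ hφV ha))
  have hφψ : φ =ᶠ[𝓝 a] ψ := by
    filter_upwards [hfa.eventually_apply_implicitFunction hn (hinv a ha), hψV,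
      hU.mem_nhds ha] with y₁ hzero hy₂ hy₁
    exact ((hφ y₁ hy₁ (ψ y₁) hy₂).1 (hzero.trans ((hφ a ha (φ a) (hφV ha)).2 rfl))).symm
  exact (hψ.congr_of_eventuallyEq hφψ).contDiffWithinAt

theorem norm_apply_sub_le_of_norm_fderiv_comp_inl_le {G : Type*} [NormedAddCommGroup G]
    [NormedSpace ℝ G] {f : E × F → G} (hf : Differentiable ℝ f) {x₁ y₁ : E} {y₂ : F} {δ C : ℝ}
    (hC : ∀ u, ‖u - x₁‖ ≤ δ → ‖fderiv ℝ f (u, y₂) ∘L inl ℝ E F‖ ≤ C) (hy₁ : ‖y₁ - x₁‖ ≤ δ) :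
    ‖f (y₁, y₂) - f (x₁, y₂)‖ ≤ C * ‖y₁ - x₁‖ :=
  (convex_closedBall x₁ δ).norm_image_sub_le_of_norm_hasFDerivWithin_le
    (fun u _ => ((hf _).hasFDerivAt.comp u (hasFDerivAt_prodMk_left u y₂)).hasFDerivWithinAt)
    (fun u hu => hC u (mem_closedBall_iff_norm.1 hu))
    (mem_closedBall_self ((norm_nonneg _).trans hy₁)) (mem_closedBall_iff_norm.2 hy₁)

theorem exists_mapsTo_ball_forall_apply_eq_zero_iff [CompleteSpace F] {f : E × F → F}
    (hf : Differentiable ℝ f) {x₁ : E} {x₂ : F} (hfx : f (x₁, x₂) = 0) {T : F ≃L[ℝ] F} {δ : ℝ}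
    (hhalf : ∀ y₁ y₂, ‖y₁ - x₁‖ ≤ δ → ‖y₂ - x₂‖ ≤ δ →
      ‖ContinuousLinearMap.id ℝ F - (T.symm : F →L[ℝ] F) ∘L (fderiv ℝ f (y₁, y₂) ∘L inr ℝ E F)‖
        ≤ 1 / 2)
    {C : ℝ} (hC : ∀ y₁ y₂, ‖y₁ - x₁‖ ≤ δ → ‖y₂ - x₂‖ ≤ δ →
      ‖fderiv ℝ f (y₁, y₂) ∘L inl ℝ E F‖ ≤ C)
    {δ' : ℝ} (hMC0 : 0 < ‖(T.symm : F →L[ℝ] F)‖ * C)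
    (hMC : ‖(T.symm : F →L[ℝ] F)‖ * C * δ' ≤ δ / 2) (hδ'δ : δ' ≤ δ) :
    ∃ φ : E → F, MapsTo φ (ball x₁ δ') (ball x₂ δ) ∧
      ∀ y₁ ∈ ball x₁ δ', ∀ y₂ ∈ closedBall x₂ δ, f (y₁, y₂) = 0 ↔ y₂ = φ y₁ := by
  set M := ‖(T.symm : F →L[ℝ] F)‖
  have hN : ∀ y₁, ‖y₁ - x₁‖ ≤ δ →
      LipschitzOnWith (1 / 2) (newtonMap T fun z => f (y₁, z)) (closedBall x₂ δ) :=
    fun y₁ hy₁ => lipschitzOnWith_newtonMap (convex_closedBall x₂ δ)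
      (fun z _ => (hf _).hasFDerivAt.comp z (hasFDerivAt_prodMk_right y₁ z))
      (fun z hz => by simpa using hhalf y₁ z hy₁ (mem_closedBall_iff_norm.1 hz))
  have hbase : ∀ y₁, ‖y₁ - x₁‖ ≤ δ → ‖T.symm (f (y₁, x₂))‖ ≤ M * C * ‖y₁ - x₁‖ := by
    intro y₁ hy₁
    have hC₁ := norm_apply_sub_le_of_norm_fderiv_comp_inl_le hf
      (fun u hu => hC u x₂ hu (by simpa using (norm_nonneg _).trans hy₁)) hy₁
    rw [hfx, sub_zero] at hC₁
    calc ‖T.symm (f (y₁, x₂))‖ ≤ M * ‖f (y₁, x₂)‖ := (T.symm : F →L[ℝ] F).le_opNorm _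
      _ ≤ M * C * ‖y₁ - x₁‖ := by
        rw [mul_assoc]; exact mul_le_mul_of_nonneg_left hC₁ (norm_nonneg _)
  have hex : ∀ y₁, ‖y₁ - x₁‖ < δ' → ∃ y₂ ∈ closedBall x₂ δ, f (y₁, y₂) = 0 := by
    intro y₁ hy₁
    refine exists_apply_eq_zero_mem_closedBall (hN y₁ (hy₁.le.trans hδ'δ)) (by norm_num) ?_
    calc ‖T.symm (f (y₁, x₂))‖ ≤ M * C * δ' :=
          (hbase y₁ (hy₁.le.trans hδ'δ)).trans (by gcongr)
      _ ≤ (1 - (1 / 2 : ℝ≥0)) * δ := by norm_num; linarith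
  choose! φ hφ hφ0 using hex
  refine ⟨φ, fun y₁ hy₁ => ?_, fun y₁ hy₁ y₂ hy₂ => ?_⟩
  · rw [mem_ball_iff_norm] at hy₁ ⊢
    have hφx₂ := one_sub_mul_norm_sub_le_of_apply_eq_zero (hN y₁ (hy₁.le.trans hδ'δ))
      (hφ y₁ hy₁) (mem_closedBall_self ((norm_nonneg _).trans (hy₁.le.trans hδ'δ))) (hφ0 y₁ hy₁)
    norm_num at hφx₂
    linarith [hbase y₁ (hy₁.le.trans hδ'δ), mul_lt_mul_of_pos_left hy₁ hMC0]
  · rw [mem_ball_iff_norm] at hy₁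
    exact ⟨fun h0 => eq_of_apply_eq_zero (hN y₁ (hy₁.le.trans hδ'δ)) (by norm_num) hy₂
      (hφ y₁ hy₁) h0 (hφ0 y₁ hy₁), fun h => h ▸ hφ0 y₁ hy₁⟩

theorem stmt0_general (p q : ℕ)
    (f : EuclideanSpace ℝ (Fin p) × EuclideanSpace ℝ (Fin q) → EuclideanSpace ℝ (Fin q))
    (hf : ContDiff ℝ 2 f)
    (x₁ : EuclideanSpace ℝ (Fin p)) (x₂ : EuclideanSpace ℝ (Fin q))
    (hfx : f (x₁, x₂) = 0)
    (T : EuclideanSpace ℝ (Fin q) ≃L[ℝ] EuclideanSpace ℝ (Fin q))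
    (δ : ℝ)
    (hhalf : ∀ y₁ y₂, ‖y₁ - x₁‖ ≤ δ → ‖y₂ - x₂‖ ≤ δ →
      ‖ContinuousLinearMap.id ℝ (EuclideanSpace ℝ (Fin q)) -
        (T.symm : EuclideanSpace ℝ (Fin q) →L[ℝ] EuclideanSpace ℝ (Fin q)).comp
          ((fderiv ℝ f (y₁, y₂)).comp
            (ContinuousLinearMap.inr ℝ (EuclideanSpace ℝ (Fin p))
              (EuclideanSpace ℝ (Fin q))))‖ ≤ 1 / 2)
    (C : ℝ)
    (hC' : ∀ y₁ y₂, ‖y₁ - x₁‖ ≤ δ → ‖y₂ - x₂‖ ≤ δ →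
      ‖(fderiv ℝ f (y₁, y₂)).comp
        (ContinuousLinearMap.inl ℝ (EuclideanSpace ℝ (Fin p))
          (EuclideanSpace ℝ (Fin q)))‖ ≤ C)
    (M : ℝ)
    (hM : M = ‖(T.symm : EuclideanSpace ℝ (Fin q) →L[ℝ] EuclideanSpace ℝ (Fin q))‖)
    (δ' : ℝ) (hδ'def : δ' = δ / (2 * M * C)) (hδ'δ : δ' ≤ δ) :
    ∃ φ : EuclideanSpace ℝ (Fin p) → EuclideanSpace ℝ (Fin q),
      ContDiffOn ℝ 2 φ (ball x₁ δ') ∧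
      ∀ y₁ y₂, ‖y₁ - x₁‖ < δ' → ‖y₂ - x₂‖ < δ → (f (y₁, y₂) = 0 ↔ y₂ = φ y₁) := by
  rcases le_or_gt δ' 0 with hδ'0 | hδ'0
  · exact ⟨0, by simp [ball_eq_empty.2 hδ'0],
      fun y₁ _ hy₁ => absurd ((norm_nonneg _).trans_lt hy₁) hδ'0.not_gt⟩
  -- `δ' > 0` rules out the junk value `δ / 0 = 0`, so `M C δ' = δ / 2` and `M C > 0`.
  have hMC : M * C * δ' = δ / 2 := by
    have : M * C ≠ 0 := fun h => hδ'0.ne' (by rw [hδ'def, mul_assoc, h, mul_zero, div_zero])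
    calc M * C * δ' = δ / 2 * (M * C / (M * C)) := by rw [hδ'def]; ring
      _ = δ / 2 := by rw [div_self this, mul_one]
  have hMC0 : 0 < M * C := pos_of_mul_pos_left (hMC ▸ half_pos (hδ'0.trans_le hδ'δ)) hδ'0.le
  subst hM
  obtain ⟨φ, hφV, hgraph⟩ := exists_mapsTo_ball_forall_apply_eq_zero_iff
    (hf.differentiable two_ne_zero) hfx hhalf hC' hMC0 hMC.le hδ'δ
  refine ⟨φ, contDiffOn_of_apply_eq_zero_iff hf two_ne_zero isOpen_ball isOpen_ball hφV
    (fun y₁ hy₁ y₂ hy₂ => hgraph y₁ hy₁ y₂ (ball_subset_closedBall hy₂)) (fun y₁ hy₁ => ?_),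
    fun y₁ y₂ hy₁ hy₂ => hgraph y₁ (mem_ball_iff_norm.2 hy₁) y₂ (mem_closedBall_iff_norm.2 hy₂.le)⟩
  refine (isInvertible_equiv_comp (e := T.symm)).1 (isInvertible_of_norm_id_sub_lt_one ?_)
  exact (hhalf y₁ (φ y₁) ((mem_ball_iff_norm.1 hy₁).le.trans hδ'δ)
    (mem_ball_iff_norm.1 (hφV hy₁)).le).trans_lt (by norm_num)

/-- Quantitative implicit function theorem. Let `f : ℝᵖ × ℝ^q → ℝ^q` be `C²`,
`x = (x₁, x₂)` with `f x = 0` and `T = D_{x₂} f (x)` invertible. If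
`‖Id - T⁻¹ ∘ D_{x₂} f (y)‖ ≤ 1/2` and `‖D_{x₁} f (y)‖ ≤ C` on the `δ`-bi-ball around `x`,
`M = ‖T⁻¹‖` and `δ' = δ / (2 M C) ≤ δ`, then on `{‖y₁ - x₁‖ < δ'}` the zero set of `f`
(within `‖y₂ - x₂‖ < δ`) is the graph of a `C²` function `φ`. -/
theorem stmt0 (p q : ℕ) (hp : 0 < p) (hq : 0 < q)
    (f : EuclideanSpace ℝ (Fin p) × EuclideanSpace ℝ (Fin q) → EuclideanSpace ℝ (Fin q))
    (hf : ContDiff ℝ 2 f)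
    (x₁ : EuclideanSpace ℝ (Fin p)) (x₂ : EuclideanSpace ℝ (Fin q))
    (hfx : f (x₁, x₂) = 0)
    (T : EuclideanSpace ℝ (Fin q) ≃L[ℝ] EuclideanSpace ℝ (Fin q))
    (hT : (T : EuclideanSpace ℝ (Fin q) →L[ℝ] EuclideanSpace ℝ (Fin q)) =
      (fderiv ℝ f (x₁, x₂)).comp
        (ContinuousLinearMap.inr ℝ (EuclideanSpace ℝ (Fin p)) (EuclideanSpace ℝ (Fin q))))
    (δ : ℝ) (hδ : 0 < δ)
    (hhalf : ∀ y₁ y₂, ‖y₁ - x₁‖ ≤ δ → ‖y₂ - x₂‖ ≤ δ →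
      ‖ContinuousLinearMap.id ℝ (EuclideanSpace ℝ (Fin q)) -
        (T.symm : EuclideanSpace ℝ (Fin q) →L[ℝ] EuclideanSpace ℝ (Fin q)).comp
          ((fderiv ℝ f (y₁, y₂)).comp
            (ContinuousLinearMap.inr ℝ (EuclideanSpace ℝ (Fin p))
              (EuclideanSpace ℝ (Fin q))))‖ ≤ 1 / 2)
    (C : ℝ) (hC : 0 < C)
    (hC' : ∀ y₁ y₂, ‖y₁ - x₁‖ ≤ δ → ‖y₂ - x₂‖ ≤ δ →
      ‖(fderiv ℝ f (y₁, y₂)).comp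
        (ContinuousLinearMap.inl ℝ (EuclideanSpace ℝ (Fin p))
          (EuclideanSpace ℝ (Fin q)))‖ ≤ C)
    (M : ℝ)
    (hM : M = ‖(T.symm : EuclideanSpace ℝ (Fin q) →L[ℝ] EuclideanSpace ℝ (Fin q))‖)
    (δ' : ℝ) (hδ'def : δ' = δ / (2 * M * C)) (hδ'δ : δ' ≤ δ) :
    ∃ φ : EuclideanSpace ℝ (Fin p) → EuclideanSpace ℝ (Fin q),
      ContDiffOn ℝ 2 φ (ball x₁ δ') ∧
      ∀ y₁ y₂, ‖y₁ - x₁‖ < δ' → ‖y₂ - x₂‖ < δ → (f (y₁, y₂) = 0 ↔ y₂ = φ y₁) :=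
  stmt0_general p q f hf x₁ x₂ hfx T δ hhalf C hC' M hM δ' hδ'def hδ'δ
end

section
/- Let 1 ≤ r ≤ n be integers, let (F, g) and (E, h) be complex inner product (Hermitian) spaces of finite dimensions n and r respectively, and let f : F → E be a linear map of rank r (i.e., surjective). Then f ∘ f* : E → E is invertible and ‖(f ∘ f*)⁻¹‖ ≤ (inf_{g ∈ L_sing(F,E)} ‖f − g‖²)⁻¹, i.e., the operator norm of the inverse of f f* is at most the inverse of the square of the distance from f to the set of non-surjective linear maps from F to E. -/
open ContinuousLinearMap Function
open scoped InnerProductSpace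

/-! Let `c` be the minimum of `‖f* y‖` over unit vectors `y`, attained at `e`. Since
`⟪y, f f* y⟫ = ‖f* y‖²`, the operator `f f*` is bounded below by `c²`, so its inverse has norm
at most `c⁻²`. If `M` is not surjective, some unit `y` is orthogonal to its range, so `M* y = 0`
and `c ≤ ‖f* y‖ = ‖(f - M)* y‖ ≤ ‖f - M‖`; conversely `f - ⟪f* e, ·⟫ e` misses `e` and lies at
distance exactly `c` from `f`. Hence the infimum is `c²`. -/

namespace ContinuousLinearMap

theorem exists_norm_eq_one_forall_mul_norm_le_norm_apply {𝕜 E F : Type*} [RCLike 𝕜]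
    [NormedAddCommGroup E] [NormedSpace 𝕜 E] [FiniteDimensional 𝕜 E] [Nontrivial E]
    [SeminormedAddCommGroup F] [NormedSpace 𝕜 F] (T : E →L[𝕜] F) :
    ∃ e : E, ‖e‖ = 1 ∧ ∀ y, ‖T e‖ * ‖y‖ ≤ ‖T y‖ := by
  have := FiniteDimensional.proper_rclike 𝕜 E
  obtain ⟨x, hx⟩ := exists_ne (0 : E)
  obtain ⟨e, he, hmin⟩ := (isCompact_sphere (0 : E) 1).exists_isMinOn
    ⟨_, mem_sphere_zero_iff_norm.2 (norm_smul_inv_norm (𝕜 := 𝕜) hx)⟩ T.continuous.norm.continuousOn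
  refine ⟨e, mem_sphere_zero_iff_norm.1 he, fun y ↦ ?_⟩
  rcases eq_or_ne y 0 with rfl | hy
  · simp
  have hmin_y : ‖T e‖ ≤ ‖T ((‖y‖⁻¹ : 𝕜) • y)‖ :=
    hmin (mem_sphere_zero_iff_norm.2 (norm_smul_inv_norm hy))
  rw [map_smul, norm_smul, norm_inv, RCLike.norm_ofReal, abs_norm] at hmin_y
  rwa [le_inv_mul_iff₀ (norm_pos_iff.2 hy), mul_comm] at hmin_y

theorem exists_equiv_norm_symm_le {𝕜 E : Type*} [NontriviallyNormedField 𝕜] [CompleteSpace 𝕜]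
    [NormedAddCommGroup E] [NormedSpace 𝕜 E] [FiniteDimensional 𝕜 E] (T : E →L[𝕜] E)
    {c : ℝ} (hc : 0 < c) (hT : ∀ y, c * ‖y‖ ≤ ‖T y‖) :
    ∃ g : E ≃L[𝕜] E, (g : E →L[𝕜] E) = T ∧ ‖(g.symm : E →L[𝕜] E)‖ ≤ c⁻¹ := by
  have hinj : Injective T := (injective_iff_map_eq_zero T).2 fun y hy ↦
    norm_le_zero_iff.1 <| nonpos_of_mul_nonpos_right (by simpa [hy] using hT y) hc
  set g := (LinearEquiv.ofInjectiveEndo (T : E →ₗ[𝕜] E) hinj).toContinuousLinearEquiv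
  refine ⟨g, rfl, opNorm_le_bound _ (inv_nonneg.2 hc.le) fun y ↦ ?_⟩
  rw [inv_mul_eq_div, le_div_iff₀' hc]
  exact (hT (g.symm y)).trans_eq (congrArg norm (g.apply_symm_apply y))

section InnerProduct

variable {𝕜 E F : Type*} [RCLike 𝕜] [NormedAddCommGroup E] [InnerProductSpace 𝕜 E]
  [NormedAddCommGroup F] [InnerProductSpace 𝕜 F] [CompleteSpace E] [CompleteSpace F]

theorem adjoint_injective_of_surjective {f : F →L[𝕜] E} (hf : Surjective f) :
    Injective (adjoint f) := by
  rw [← coe_coe, ← LinearMap.ker_eq_bot, ← orthogonal_range, LinearMap.range_eq_top.2 hf,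
    Submodule.top_orthogonal_eq_bot]

theorem exists_ne_zero_adjoint_apply_eq_zero [FiniteDimensional 𝕜 E] {M : F →L[𝕜] E}
    (hM : ¬Surjective M) : ∃ y ≠ 0, adjoint M y = 0 := by
  have hker : (adjoint M : E →ₗ[𝕜] F).ker ≠ ⊥ := by
    rw [← orthogonal_range, Ne, Submodule.orthogonal_eq_bot_iff, LinearMap.range_eq_top]
    exact hM
  obtain ⟨y, hy, hy0⟩ := Submodule.exists_mem_ne_zero_of_ne_bot hker
  exact ⟨y, hy0, hy⟩

theorem le_norm_sub_of_not_surjective [FiniteDimensional 𝕜 E] {f M : F →L[𝕜] E} {c : ℝ}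
    (hc : ∀ y, c * ‖y‖ ≤ ‖adjoint f y‖) (hM : ¬Surjective M) : c ≤ ‖f - M‖ := by
  obtain ⟨y, hy0, hy⟩ := exists_ne_zero_adjoint_apply_eq_zero hM
  have hfy : adjoint f y = adjoint (f - M) y := by simp [hy]
  refine le_of_mul_le_mul_right ?_ (norm_pos_iff.2 hy0)
  calc c * ‖y‖ ≤ ‖adjoint (f - M) y‖ := hfy ▸ hc y
    _ ≤ ‖adjoint (f - M)‖ * ‖y‖ := le_opNorm _ _
    _ = ‖f - M‖ * ‖y‖ := by rw [LinearIsometryEquiv.norm_map]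

theorem not_surjective_sub_smulRight_adjoint (f : F →L[𝕜] E) {e : E} (he : ‖e‖ = 1) :
    ¬Surjective (f - (innerSL 𝕜 (adjoint f e)).smulRight e) := by
  intro hsurj
  obtain ⟨x, hx⟩ := hsurj e
  have hee : ⟪e, e⟫_𝕜 = 1 := by simp [inner_self_eq_norm_sq_to_K, he]
  have h : ⟪e, (f - (innerSL 𝕜 (adjoint f e)).smulRight e) x⟫_𝕜 = 0 := by
    rw [sub_apply, inner_sub_right, smulRight_apply, innerSL_apply_apply, inner_smul_right,
      hee, mul_one, adjoint_inner_left, sub_self]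
  rw [hx, hee] at h
  exact one_ne_zero h

theorem isLeast_sq_norm_sub_not_surjective [FiniteDimensional 𝕜 E] (f : F →L[𝕜] E) {e : E}
    (he : ‖e‖ = 1) (hmin : ∀ y, ‖adjoint f e‖ * ‖y‖ ≤ ‖adjoint f y‖) :
    IsLeast {d : ℝ | ∃ M : F →L[𝕜] E, ¬Surjective M ∧ d = ‖f - M‖ ^ 2} (‖adjoint f e‖ ^ 2) := by
  refine ⟨⟨_, not_surjective_sub_smulRight_adjoint f he, ?_⟩, ?_⟩
  · rw [sub_sub_cancel, norm_smulRight_apply, innerSL_apply_norm, he, mul_one]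
  · rintro _ ⟨M, hM, rfl⟩
    gcongr
    exact le_norm_sub_of_not_surjective hmin hM

theorem sq_mul_norm_le_norm_self_comp_adjoint_apply (f : F →L[𝕜] E) {c : ℝ} (hc : 0 ≤ c)
    (hf : ∀ y, c * ‖y‖ ≤ ‖adjoint f y‖) (y : E) : c ^ 2 * ‖y‖ ≤ ‖(f ∘L adjoint f) y‖ := by
  rcases (norm_nonneg y).eq_or_lt with hy | hy
  · rw [← hy, mul_zero]; positivity
  have key : ‖adjoint f y‖ ^ 2 ≤ ‖y‖ * ‖(f ∘L adjoint f) y‖ := by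
    rw [apply_norm_sq_eq_inner_adjoint_right, adjoint_adjoint]
    exact (RCLike.re_le_norm _).trans (norm_inner_le_norm _ _)
  refine le_of_mul_le_mul_left ?_ hy
  calc ‖y‖ * (c ^ 2 * ‖y‖) = (c * ‖y‖) ^ 2 := by ring
    _ ≤ ‖adjoint f y‖ ^ 2 := by gcongr; exact hf y
    _ ≤ ‖y‖ * ‖(f ∘L adjoint f) y‖ := key

end InnerProduct

end ContinuousLinearMap

theorem stmt2_general
    (F E : Type*) [NormedAddCommGroup F] [InnerProductSpace ℂ F]
    [NormedAddCommGroup E] [InnerProductSpace ℂ E]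
    [FiniteDimensional ℂ F] [FiniteDimensional ℂ E]
    (f : F →L[ℂ] E) (hf : Function.Surjective f) :
    ∃ g : E ≃L[ℂ] E, (g : E →L[ℂ] E) = f ∘L (ContinuousLinearMap.adjoint f) ∧
      ‖(g.symm : E →L[ℂ] E)‖ ≤
        (sInf {d : ℝ | ∃ M : F →L[ℂ] E, ¬ Function.Surjective M ∧ d = ‖f - M‖ ^ 2})⁻¹ := by
  rcases subsingleton_or_nontrivial E with hE | hE
  -- here every `M` is surjective, so the infimum is `sInf ∅ = 0`
  · obtain ⟨g, hg, -⟩ := (f ∘L adjoint f).exists_equiv_norm_symm_le one_pos fun y ↦ by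
      simp [Subsingleton.elim y 0]
    refine ⟨g, hg, ?_⟩
    rw [opNorm_subsingleton]
    exact inv_nonneg.2 (Real.sInf_nonneg (by rintro _ ⟨M, -, rfl⟩; positivity))
  obtain ⟨e, he, hmin⟩ := (adjoint f).exists_norm_eq_one_forall_mul_norm_le_norm_apply
  have hpos : 0 < ‖adjoint f e‖ := norm_pos_iff.2 <|
    (map_ne_zero_iff _ (adjoint_injective_of_surjective hf)).2
      (norm_ne_zero_iff.1 (he ▸ one_ne_zero))
  rw [(isLeast_sq_norm_sub_not_surjective f he hmin).csInf_eq]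
  exact (f ∘L adjoint f).exists_equiv_norm_symm_le (pow_pos hpos 2)
    (sq_mul_norm_le_norm_self_comp_adjoint_apply f (norm_nonneg _) hmin)

/-- Let `1 ≤ r ≤ n`, let `F` and `E` be complex Hermitian spaces of dimensions `n` and `r`,
and let `f : F → E` be a surjective linear map. Then `f ∘ f*` is invertible and
`‖(f ∘ f*)⁻¹‖ ≤ (inf_{M non-surjective} ‖f - M‖²)⁻¹`. -/
theorem stmt2 (n r : ℕ) (hr : 1 ≤ r) (hrn : r ≤ n)
    (F E : Type*) [NormedAddCommGroup F] [InnerProductSpace ℂ F]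
    [NormedAddCommGroup E] [InnerProductSpace ℂ E]
    [FiniteDimensional ℂ F] [FiniteDimensional ℂ E]
    (hF : Module.finrank ℂ F = n) (hE : Module.finrank ℂ E = r)
    (f : F →L[ℂ] E) (hf : Function.Surjective f) :
    ∃ g : E ≃L[ℂ] E, (g : E →L[ℂ] E) = f ∘L (ContinuousLinearMap.adjoint f) ∧
      ‖(g.symm : E →L[ℂ] E)‖ ≤
        (sInf {d : ℝ | ∃ M : F →L[ℂ] E, ¬ Function.Surjective M ∧ d = ‖f - M‖ ^ 2})⁻¹ :=
  stmt2_general F E f hf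
end

section
/- Let 1 ≤ r ≤ n be integers, let (F, g) and (E, h) be complex inner product (Hermitian) spaces of finite dimensions n and r respectively, and let f : F → E be a linear map of rank r (i.e., surjective). Then the square of the distance from f to the set of non-surjective linear maps equals the smallest eigenvalue of the positive self-adjoint operator f ∘ f* : E → E; that is, (inf_{g ∈ L_sing(F,E)} ‖f − g‖)² = min spec(f ∘ f*). -/
/-!
A map `M : F → E` fails to be onto exactly when its adjoint kills a nonzero `y`
(`(range M)ᗮ = ker M†`), and then `‖f - M‖ ‖y‖ ≥ ‖(f - M)† y‖ = ‖f† y‖`. So the distance from `f`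
to the non-surjective maps is at least `min_{‖y‖ = 1} ‖f† y‖`, and the rank-one correction
`f - y₀ ⊗ f† y₀` at a minimizing `y₀` attains it. Since `‖f† y‖² = re ⟪f f† y, y⟫`, the square of
that minimum is the least Rayleigh quotient of `f f†`, which is its smallest eigenvalue.
-/

open ContinuousLinearMap InnerProductSpace Module.End

section

variable {𝕜 E F : Type*} [RCLike 𝕜] [NormedAddCommGroup E] [InnerProductSpace 𝕜 E]
  [NormedAddCommGroup F] [InnerProductSpace 𝕜 F]

theorem ContinuousLinearMap.iInf_rayleighQuotient_le (T : E →L[𝕜] E) {x : E} (hx : x ≠ 0) :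
    ⨅ y : {y : E // y ≠ 0}, T.rayleighQuotient y ≤ T.rayleighQuotient x :=
  ciInf_le ⟨-‖T‖, by rintro _ ⟨y, rfl⟩; exact neg_le_of_abs_le (T.rayleighQuotient_le_norm y)⟩
    (⟨x, hx⟩ : {y : E // y ≠ 0})

theorem ContinuousLinearMap.rayleighQuotient_eq_of_apply_eq_smul {T : E →L[𝕜] E} {x : E}
    {μ : ℝ} (hx : x ≠ 0) (hTx : T x = (μ : 𝕜) • x) : T.rayleighQuotient x = μ := by
  rw [rayleighQuotient, reApplyInnerSelf_apply, hTx, inner_smul_left, inner_self_eq_norm_sq_to_K]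
  simp only [RCLike.conj_ofReal, ← RCLike.ofReal_pow, ← RCLike.ofReal_mul, RCLike.ofReal_re]
  field_simp

theorem ContinuousLinearMap.rayleighQuotient_comp_adjoint [CompleteSpace E] [CompleteSpace F]
    (f : F →L[𝕜] E) (x : E) :
    (f ∘L adjoint f).rayleighQuotient x = ‖adjoint f x‖ ^ 2 / ‖x‖ ^ 2 := by
  rw [apply_norm_sq_eq_inner_adjoint_left, adjoint_adjoint]
  rfl

theorem Module.End.HasEigenvalue.exists_norm_eq_one_apply_eq_smul {T : E →ₗ[𝕜] E} {μ : 𝕜}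
    (hμ : HasEigenvalue T μ) : ∃ y : E, ‖y‖ = 1 ∧ T y = μ • y := by
  obtain ⟨v, hv, hv0⟩ := hμ.exists_hasEigenvector
  refine ⟨(‖v‖ : 𝕜)⁻¹ • v, norm_smul_inv_norm hv0, ?_⟩
  exact mem_eigenspace_iff.mp (Submodule.smul_mem _ _ hv)

theorem LinearMap.IsSymmetric.sInf_real_spectrum_eq_iInf_rayleighQuotient [FiniteDimensional 𝕜 E]
    [Nontrivial E] {T : E →L[𝕜] E} (hT : (T : E →ₗ[𝕜] E).IsSymmetric) :
    sInf {t : ℝ | (t : 𝕜) ∈ spectrum 𝕜 T} = ⨅ x : {x : E // x ≠ 0}, T.rayleighQuotient x := by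
  have := FiniteDimensional.complete 𝕜 E
  simp only [spectrum_eq, ← hasEigenvalue_iff_mem_spectrum]
  refine IsLeast.csInf_eq ⟨hT.hasEigenvalue_iInf_of_finiteDimensional, ?_⟩
  rintro t ht
  obtain ⟨v, hv, hv0⟩ := ht.exists_hasEigenvector
  rw [← rayleighQuotient_eq_of_apply_eq_smul hv0 (mem_eigenspace_iff.mp hv)]
  exact T.iInf_rayleighQuotient_le hv0

theorem ContinuousLinearMap.not_surjective_iff_exists_adjoint_apply_eq_zero [CompleteSpace F]
    [CompleteSpace E] [FiniteDimensional 𝕜 E] (M : F →L[𝕜] E) :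
    ¬ Function.Surjective M ↔ ∃ y ≠ 0, adjoint M y = 0 := by
  have hsurj : Function.Surjective M ↔ M.range = ⊤ := LinearMap.range_eq_top.symm
  rw [hsurj, ← Submodule.orthogonal_eq_bot_iff, orthogonal_range, ← Ne, Submodule.ne_bot_iff]
  exact exists_congr fun _ ↦ and_comm

theorem ContinuousLinearMap.sInf_norm_sub_not_surjective [CompleteSpace F] [CompleteSpace E]
    [FiniteDimensional 𝕜 E] {f : F →L[𝕜] E} {y₀ : E} (hy₀ : ‖y₀‖ = 1)
    (hmin : ∀ y, ‖adjoint f y₀‖ * ‖y‖ ≤ ‖adjoint f y‖) :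
    sInf {d : ℝ | ∃ M : F →L[𝕜] E, ¬ Function.Surjective M ∧ d = ‖f - M‖} = ‖adjoint f y₀‖ := by
  refine IsLeast.csInf_eq ⟨⟨f - rankOne 𝕜 y₀ (adjoint f y₀), ?_, ?_⟩, ?_⟩
  · rw [not_surjective_iff_exists_adjoint_apply_eq_zero]
    refine ⟨y₀, norm_ne_zero_iff.mp (hy₀ ▸ one_ne_zero), ?_⟩
    simp [inner_self_eq_norm_sq_to_K, hy₀]
  · rw [sub_sub_cancel, norm_rankOne, hy₀, one_mul]
  · rintro _ ⟨M, hM, rfl⟩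
    obtain ⟨y, hy0, hMy⟩ := (not_surjective_iff_exists_adjoint_apply_eq_zero M).mp hM
    refine le_of_mul_le_mul_right ?_ (norm_pos_iff.mpr hy0)
    calc ‖adjoint f y₀‖ * ‖y‖ ≤ ‖adjoint f y‖ := hmin y
      _ = ‖adjoint (f - M) y‖ := by rw [map_sub, sub_apply, hMy, sub_zero]
      _ ≤ ‖adjoint (f - M)‖ * ‖y‖ := le_opNorm _ _
      _ = ‖f - M‖ * ‖y‖ := by rw [LinearIsometryEquiv.norm_map]

end

theorem stmt3_general (r : ℕ) (hr : 1 ≤ r)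
    (F E : Type*) [NormedAddCommGroup F] [InnerProductSpace ℂ F]
    [NormedAddCommGroup E] [InnerProductSpace ℂ E]
    [FiniteDimensional ℂ F] [FiniteDimensional ℂ E]
    (hE : Module.finrank ℂ E = r)
    (f : F →L[ℂ] E) :
    (sInf {d : ℝ | ∃ M : F →L[ℂ] E, ¬ Function.Surjective M ∧ d = ‖f - M‖}) ^ 2 =
      sInf {t : ℝ | (t : ℂ) ∈ spectrum ℂ (f ∘L (ContinuousLinearMap.adjoint f))} := by
  have : Nontrivial E := Module.nontrivial_of_finrank_pos (R := ℂ) (by omega)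
  set T := f ∘L adjoint f
  have hT : (T : E →ₗ[ℂ] E).IsSymmetric := (isPositive_self_comp_adjoint f).isSymmetric
  obtain ⟨y₀, hy₀, hTy₀⟩ : ∃ y₀ : E, ‖y₀‖ = 1 ∧
      T y₀ = ((⨅ x : {x : E // x ≠ 0}, T.rayleighQuotient x : ℝ) : ℂ) • y₀ :=
    hT.hasEigenvalue_iInf_of_finiteDimensional.exists_norm_eq_one_apply_eq_smul
  have hμ : ‖adjoint f y₀‖ ^ 2 = ⨅ x : {x : E // x ≠ 0}, T.rayleighQuotient x := by
    have h := rayleighQuotient_eq_of_apply_eq_smul (norm_ne_zero_iff.mp (hy₀ ▸ one_ne_zero)) hTy₀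
    rwa [rayleighQuotient_comp_adjoint, hy₀, one_pow, div_one] at h
  have hmin : ∀ y, ‖adjoint f y₀‖ * ‖y‖ ≤ ‖adjoint f y‖ := by
    intro y
    rcases eq_or_ne y 0 with rfl | hy
    · simp
    have h := T.iInf_rayleighQuotient_le hy
    rw [rayleighQuotient_comp_adjoint, le_div_iff₀ (by positivity), ← hμ, ← mul_pow] at h
    exact pow_le_pow_iff_left₀ (by positivity) (norm_nonneg _) two_ne_zero |>.mp h
  have hspec :
      sInf {t : ℝ | (t : ℂ) ∈ spectrum ℂ T} = ⨅ x : {x : E // x ≠ 0}, T.rayleighQuotient x :=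
    hT.sInf_real_spectrum_eq_iInf_rayleighQuotient
  rw [sInf_norm_sub_not_surjective hy₀ hmin, hspec, hμ]

/-- Let `1 ≤ r ≤ n`, let `F` and `E` be complex Hermitian spaces of dimensions `n` and `r`,
and let `f : F → E` be a surjective linear map. Then the square of the distance from `f`
to the set of non-surjective linear maps equals the smallest point of the spectrum of the
positive self-adjoint operator `f ∘ f* : E → E`. -/
theorem stmt3 (n r : ℕ) (hr : 1 ≤ r) (hrn : r ≤ n)
    (F E : Type*) [NormedAddCommGroup F] [InnerProductSpace ℂ F]
    [NormedAddCommGroup E] [InnerProductSpace ℂ E]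
    [FiniteDimensional ℂ F] [FiniteDimensional ℂ E]
    (hF : Module.finrank ℂ F = n) (hE : Module.finrank ℂ E = r)
    (f : F →L[ℂ] E) (hf : Function.Surjective f) :
    (sInf {d : ℝ | ∃ M : F →L[ℂ] E, ¬ Function.Surjective M ∧ d = ‖f - M‖}) ^ 2 =
      sInf {t : ℝ | (t : ℂ) ∈ spectrum ℂ (f ∘L (ContinuousLinearMap.adjoint f))} :=
  stmt3_general r hr F E hE f
end

section
/- Let (F, g) and (E, h) be finite-dimensional complex inner product spaces, let f : F → E be a surjective linear map, and let J ⊆ F denote the orthogonal complement of ker f. Then the distance from f to the set of non-surjective linear maps F → E equals the distance from the restriction f|_J to the set of non-surjective linear maps J → E; that is, inf_{g ∈ L_sing(F,E)} ‖f − g‖ = inf_{h ∈ L_sing(J,E)} ‖f|_J − h‖. -/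
/-!
Precomposition with the inclusion `ι : J → F` turns a non-surjective `g : F → E` into
a non-surjective `g ∘ ι` with `‖f ∘ ι - g ∘ ι‖ ≤ ‖f - g‖`. Conversely, precomposition with the
orthogonal projection `P : F → J` turns a non-surjective `h : J → E` into a non-surjective
`h ∘ P`, and since `f = f ∘ ι ∘ P` (as `f` vanishes on `Jᗮ = ker f`) we get
`‖f - h ∘ P‖ = ‖f ∘ ι - h‖`. So each infimum is bounded by the other.
-/

open ContinuousLinearMap Submodule

theorem ContinuousLinearMap.norm_comp_le_of_norm_le_one {𝕜 E F G : Type*}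
    [NontriviallyNormedField 𝕜]
    [SeminormedAddCommGroup E] [SeminormedAddCommGroup F] [SeminormedAddCommGroup G]
    [NormedSpace 𝕜 E] [NormedSpace 𝕜 F] [NormedSpace 𝕜 G]
    (g : F →L[𝕜] G) {k : E →L[𝕜] F} (hk : ‖k‖ ≤ 1) : ‖g ∘L k‖ ≤ ‖g‖ :=
  (opNorm_comp_le g k).trans (mul_le_of_le_one_right (norm_nonneg g) hk)

section

variable {𝕜 F E : Type*} [RCLike 𝕜] [NormedAddCommGroup F] [InnerProductSpace 𝕜 F]
  [NormedAddCommGroup E] [NormedSpace 𝕜 E]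

theorem Submodule.orthogonal_orthogonal_ker [CompleteSpace F] (f : F →L[𝕜] E) :
    (LinearMap.ker (f : F →ₗ[𝕜] E))ᗮᗮ = LinearMap.ker (f : F →ₗ[𝕜] E) := by
  rw [orthogonal_orthogonal_eq_closure]
  exact (isClosed_ker f).submodule_topologicalClosure_eq

theorem Submodule.orthogonalProjectionOnto_surjective (J : Submodule 𝕜 F)
    [J.HasOrthogonalProjection] : Function.Surjective J.orthogonalProjectionOnto :=
  fun v ↦ ⟨v, J.orthogonalProjectionOnto_mem_subspace_eq_self v⟩

variable (J : Submodule 𝕜 F) [J.HasOrthogonalProjection]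

theorem ContinuousLinearMap.comp_starProjection_of_orthogonal_le_ker {f : F →L[𝕜] E}
    (hf : Jᗮ ≤ LinearMap.ker (f : F →ₗ[𝕜] E)) : f ∘L J.starProjection = f := by
  ext x
  have hx : f (x - J.starProjection x) = 0 := hf (J.sub_starProjection_mem_orthogonal x)
  rwa [map_sub, sub_eq_zero, eq_comm] at hx

theorem ContinuousLinearMap.norm_sub_comp_orthogonalProjectionOnto {f : F →L[𝕜] E}
    (hf : Jᗮ ≤ LinearMap.ker (f : F →ₗ[𝕜] E)) (h : J →L[𝕜] E) :
    ‖f - h ∘L J.orthogonalProjectionOnto‖ = ‖f ∘L J.subtypeL - h‖ := by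
  refine le_antisymm ?_ ?_
  · calc ‖f - h ∘L J.orthogonalProjectionOnto‖
        = ‖(f ∘L J.subtypeL - h) ∘L J.orthogonalProjectionOnto‖ := by
          rw [sub_comp, comp_assoc, ← starProjection,
            comp_starProjection_of_orthogonal_le_ker J hf]
      _ ≤ ‖f ∘L J.subtypeL - h‖ :=
          norm_comp_le_of_norm_le_one _ J.orthogonalProjectionOnto_norm_le
  · calc ‖f ∘L J.subtypeL - h‖
        = ‖(f - h ∘L J.orthogonalProjectionOnto) ∘L J.subtypeL‖ := by
          congr 1; ext v; simp
      _ ≤ ‖f - h ∘L J.orthogonalProjectionOnto‖ :=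
          norm_comp_le_of_norm_le_one _ J.norm_subtypeL_le

end

theorem stmt6_general (F E : Type*) [NormedAddCommGroup F] [InnerProductSpace ℂ F]
    [NormedAddCommGroup E] [InnerProductSpace ℂ E]
    [FiniteDimensional ℂ F]
    (f : F →L[ℂ] E) :
    sInf {d : ℝ | ∃ g : F →L[ℂ] E, ¬ Function.Surjective g ∧ d = ‖f - g‖} =
      sInf {d : ℝ | ∃ h : ((LinearMap.ker f)ᗮ : Submodule ℂ F) →L[ℂ] E,
        ¬ Function.Surjective h ∧ d = ‖f ∘L (LinearMap.ker (f : F →ₗ[ℂ] E))ᗮ.subtypeL - h‖} := by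
  set J : Submodule ℂ F := (LinearMap.ker (f : F →ₗ[ℂ] E))ᗮ
  have hf : Jᗮ ≤ LinearMap.ker (f : F →ₗ[ℂ] E) := (orthogonal_orthogonal_ker f).le
  apply csInf_eq_csInf_of_forall_exists_le
  · rintro _ ⟨g, hg, rfl⟩
    refine ⟨_, ⟨g ∘L J.subtypeL, ?_, rfl⟩, ?_⟩
    · rw [coe_comp]
      exact mt Function.Surjective.of_comp hg
    · rw [← sub_comp]
      exact norm_comp_le_of_norm_le_one (f - g) J.norm_subtypeL_le
  · rintro _ ⟨h, hh, rfl⟩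
    refine ⟨_, ⟨h ∘L J.orthogonalProjectionOnto, ?_, rfl⟩,
      (norm_sub_comp_orthogonalProjectionOnto J hf h).le⟩
    rwa [coe_comp, (orthogonalProjectionOnto_surjective J).of_comp_iff]

/-- Let `F` and `E` be finite-dimensional complex inner product spaces, `f : F → E` a
surjective linear map, and `J = (ker f)ᗮ`. Then the distance from `f` to the set of
non-surjective linear maps `F → E` equals the distance from `f|_J` to the set of
non-surjective linear maps `J → E`. -/
theorem stmt6 (F E : Type*) [NormedAddCommGroup F] [InnerProductSpace ℂ F]
    [NormedAddCommGroup E] [InnerProductSpace ℂ E]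
    [FiniteDimensional ℂ F] [FiniteDimensional ℂ E]
    (f : F →L[ℂ] E) (hf : Function.Surjective f) :
    sInf {d : ℝ | ∃ g : F →L[ℂ] E, ¬ Function.Surjective g ∧ d = ‖f - g‖} =
      sInf {d : ℝ | ∃ h : ((LinearMap.ker f)ᗮ : Submodule ℂ F) →L[ℂ] E,
        ¬ Function.Surjective h ∧ d = ‖f ∘L (LinearMap.ker (f : F →ₗ[ℂ] E))ᗮ.subtypeL - h‖} :=
  stmt6_general F E f
end
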